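/- Let r > 0, μ ≠ 0, let k ≥ 2 be an integer, and let s₁, …, s_{k−1} ∈ (0,1) be pairwise distinct. Set E_j = e^{rμ(1−s_j)} − 1 for j = 1, …, k−1, and E₀ = e^{rμ} − 1. Then k·|E₀|·∫₀^∞ (1+θ|E₀|)^{−2} ∏_{i=1}^{k−1} (1 − 1/(1+θ|E_i|)) dθ = k·∏_{i=1}^{k−1} E_i/(E_i−E₀) + k·∑_{j=1}^{k−1} (E₀E_j/(E_j−E₀)²)·(∏_{1≤i≤k−1, i≠j} E_i/(E_i−E_j))·log(E₀/E_j). -/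

import Mathlib

/-!
Put `x = -θ⁻¹`, so that `1 - 1 / (1 + θ a) = a / (a - x)`. The Lagrange interpolation identity
`∏ᵢ aᵢ / (aᵢ - x) = 1 + ∑ⱼ ℓⱼ x / (aⱼ - x)`, with `ℓⱼ = ∏_{i ≠ j} aᵢ / (aᵢ - aⱼ)`, turns the
integrand into `b (1 + θ b)⁻²` minus a combination of the `b (1 + θ b)⁻² (1 + θ aⱼ)⁻¹`, each of
which has an elementary primitive (a rational term plus `log ((1 + θ aⱼ) / (1 + θ b))`).
The same identity at `x = b` produces the product term. Finally all `Eⱼ` have the sign of `μ`,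
and the closed form is homogeneous of degree `0`, so `E` may be replaced by `|E|`.
-/

open MeasureTheory Real Filter Topology Set

section PartialFractions

variable {ι K : Type*} [DecidableEq ι] [Field K]

/-- The value at `0` of the Lagrange basis polynomial of the nodes `a '' t` at the node `a j`. -/
def lagrangeWeight (a : ι → K) (t : Finset ι) (j : ι) : K :=
  ∏ i ∈ t.erase j, a i / (a i - a j)

theorem lagrangeWeight_of_eq_const_mul {a a' : ι → K} {t : Finset ι} {c : K} (hc : c ≠ 0)
    (ha : ∀ i ∈ t, a' i = c * a i) {j : ι} (hj : j ∈ t) :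
    lagrangeWeight a' t j = lagrangeWeight a t j :=
  Finset.prod_congr rfl fun i hi => by
    rw [ha i (Finset.mem_of_mem_erase hi), ha j hj, ← mul_sub, mul_div_mul_left _ _ hc]

theorem prod_div_sub_eq_one_add_sum {a : ι → K} {t : Finset ι} (ht : Set.InjOn a t) {x : K}
    (hx : ∀ i ∈ t, a i ≠ x) :
    ∏ i ∈ t, a i / (a i - x) = 1 + ∑ j ∈ t, lagrangeWeight a t j * (x / (a j - x)) := by
  induction t using Finset.induction_on generalizing x with
  | empty => simp
  | insert m t hm ih =>
    have ht' : Set.InjOn a t := ht.mono (by simp)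
    have hne : ∀ i ∈ t, a i ≠ a m := fun i hi h =>
      hm (ht (by simp [hi]) (by simp) h ▸ hi)
    have hmx : a m - x ≠ 0 := sub_ne_zero.2 (hx m (by simp))
    have hweight_m : lagrangeWeight a (insert m t) m
        = 1 + ∑ j ∈ t, lagrangeWeight a t j * (a m / (a j - a m)) := by
      rw [lagrangeWeight, Finset.erase_insert hm, ← ih ht' hne]
    have hweight : ∀ j ∈ t, lagrangeWeight a (insert m t) j
        = lagrangeWeight a t j * (a m / (a m - a j)) := fun j hj => by
      rw [lagrangeWeight, lagrangeWeight,
        Finset.erase_insert_of_ne (ne_of_mem_of_not_mem hj hm).symm,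
        Finset.prod_insert fun h => hm (Finset.mem_of_mem_erase h), mul_comm]
    have hsplit : ∀ j ∈ t, a m / (a m - x) * (lagrangeWeight a t j * (x / (a j - x)))
        = lagrangeWeight a t j * (a m / (a j - a m)) * (x / (a m - x))
          + lagrangeWeight a t j * (a m / (a m - a j)) * (x / (a j - x)) := fun j hj => by
      have hjx : a j - x ≠ 0 := sub_ne_zero.2 (hx j (by simp [hj]))
      have hjm : a j - a m ≠ 0 := sub_ne_zero.2 (hne j hj)
      have hmj : a m - a j ≠ 0 := sub_ne_zero.2 (hne j hj).symm
      field_simp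
      ring
    have hconst : a m / (a m - x) = 1 + x / (a m - x) := by field_simp; ring
    have hsum : ∑ j ∈ t, lagrangeWeight a (insert m t) j * (x / (a j - x))
        = ∑ j ∈ t, lagrangeWeight a t j * (a m / (a m - a j)) * (x / (a j - x)) :=
      Finset.sum_congr rfl fun j hj => by rw [hweight j hj]
    rw [Finset.prod_insert hm, ih ht' fun i hi => hx i (by simp [hi]), Finset.sum_insert hm,
      hweight_m, hsum, mul_add, mul_one,
      Finset.mul_sum, Finset.sum_congr rfl hsplit, hconst, Finset.sum_add_distrib, add_mul, one_mul,
      Finset.sum_mul]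
    ring

theorem prod_one_sub_one_div_eq_one_sub_sum {a : ι → K} {t : Finset ι} (ht : Set.InjOn a t)
    {θ : K} (hθ : θ ≠ 0) (h : ∀ i ∈ t, 1 + θ * a i ≠ 0) :
    ∏ i ∈ t, (1 - 1 / (1 + θ * a i)) = 1 - ∑ j ∈ t, lagrangeWeight a t j / (1 + θ * a j) := by
  have hsub : ∀ i ∈ t, a i - -θ⁻¹ = (1 + θ * a i) / θ := fun i _ => by field_simp; ring
  have hinterp := prod_div_sub_eq_one_add_sum ht (x := -θ⁻¹) fun i hi he =>
    h i hi (by rw [he, mul_neg, mul_inv_cancel₀ hθ, add_neg_cancel])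
  rw [Finset.prod_congr rfl fun i hi => ?_, hinterp, sub_eq_add_neg, ← Finset.sum_neg_distrib]
  · refine congrArg _ (Finset.sum_congr rfl fun j hj => ?_)
    have := h j hj
    rw [hsub j hj]
    field_simp
  · have := h i hi
    rw [hsub i hi]
    field_simp
    ring

end PartialFractions

section Integrals

variable {b c : ℝ}

theorem integrableOn_and_integral_Ioi_of_hasDerivAt_of_nonneg {g g' : ℝ → ℝ} {a l : ℝ}
    (hderiv : ∀ x ∈ Ici a, HasDerivAt g (g' x) x) (hnonneg : ∀ x ∈ Ioi a, 0 ≤ g' x)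
    (hlim : Tendsto g atTop (𝓝 l)) :
    IntegrableOn g' (Ioi a) ∧ ∫ x in Ioi a, g' x = l - g a :=
  ⟨integrableOn_Ioi_deriv_of_nonneg' hderiv hnonneg hlim,
    integral_Ioi_of_hasDerivAt_of_nonneg' hderiv hnonneg hlim⟩

theorem hasDerivAt_one_add_mul (c θ : ℝ) : HasDerivAt (fun x => 1 + x * c) c θ := by
  simpa using ((hasDerivAt_id θ).mul_const c).const_add 1

theorem tendsto_inv_one_add_mul_atTop (hb : 0 < b) :
    Tendsto (fun θ : ℝ => (1 + θ * b)⁻¹) atTop (𝓝 0) :=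
  (tendsto_atTop_add_const_left _ 1 (tendsto_id.atTop_mul_const hb)).inv_tendsto_atTop

theorem tendsto_log_one_add_mul_sub_log_one_add_mul (hb : 0 < b) (hc : 0 < c) :
    Tendsto (fun θ : ℝ => log (1 + θ * c) - log (1 + θ * b)) atTop (𝓝 (log (c / b))) := by
  have hquot : Tendsto (fun θ : ℝ => c / b + (b - c) / b * (1 + θ * b)⁻¹) atTop (𝓝 (c / b)) := by
    simpa using ((tendsto_inv_one_add_mul_atTop hb).const_mul ((b - c) / b)).const_add (c / b)
  refine (hquot.log (by positivity)).congr' ?_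
  filter_upwards [eventually_ge_atTop 0] with θ hθ
  have : 0 < 1 + θ * b := by positivity
  have : 0 < 1 + θ * c := by positivity
  rw [← log_div (by positivity) (by positivity)]
  congr 1
  field_simp
  ring

theorem integral_Ioi_mul_inv_one_add_mul_sq (hb : 0 < b) :
    IntegrableOn (fun θ => b * ((1 + θ * b) ^ 2)⁻¹) (Ioi 0) ∧
      ∫ θ in Ioi (0 : ℝ), b * ((1 + θ * b) ^ 2)⁻¹ = 1 := by
  have hderiv : ∀ θ ∈ Ici (0 : ℝ),
      HasDerivAt (fun x => -(1 + x * b)⁻¹) (b * ((1 + θ * b) ^ 2)⁻¹) θ := fun θ hθ => by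
    have : 0 < 1 + θ * b := by have : (0 : ℝ) ≤ θ := hθ; positivity
    refine ((hasDerivAt_one_add_mul b θ).inv this.ne').neg.congr_deriv ?_
    field_simp
  have hlim := (tendsto_inv_one_add_mul_atTop hb).neg
  rw [neg_zero] at hlim
  convert integrableOn_and_integral_Ioi_of_hasDerivAt_of_nonneg hderiv
    (fun θ hθ => by have : 0 < θ := hθ; positivity) hlim using 2
  simp

theorem integral_Ioi_mul_inv_one_add_mul_sq_mul_inv (hb : 0 < b) (hc : 0 < c) (hbc : c ≠ b) :
    IntegrableOn (fun θ => b * ((1 + θ * b) ^ 2)⁻¹ * (1 + θ * c)⁻¹) (Ioi 0) ∧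
      ∫ θ in Ioi (0 : ℝ), b * ((1 + θ * b) ^ 2)⁻¹ * (1 + θ * c)⁻¹
        = b / (b - c) + b * c / (c - b) ^ 2 * log (c / b) := by
  have hcb : c - b ≠ 0 := sub_ne_zero.2 hbc
  have hbc' : b - c ≠ 0 := sub_ne_zero.2 hbc.symm
  set g : ℝ → ℝ := fun x => -(b / (b - c)) * (1 + x * b)⁻¹
    + b * c / (c - b) ^ 2 * (log (1 + x * c) - log (1 + x * b))
  have hderiv : ∀ θ ∈ Ici (0 : ℝ),
      HasDerivAt g (b * ((1 + θ * b) ^ 2)⁻¹ * (1 + θ * c)⁻¹) θ := fun θ hθ => by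
    have : (0 : ℝ) ≤ θ := hθ
    have hθb : 0 < 1 + θ * b := by positivity
    have hθc : 0 < 1 + θ * c := by positivity
    have hlinb := hasDerivAt_one_add_mul b θ
    have hlinc := hasDerivAt_one_add_mul c θ
    refine (((hlinb.inv hθb.ne').const_mul (-(b / (b - c)))).add
      (((hlinc.log hθc.ne').sub (hlinb.log hθb.ne')).const_mul
        (b * c / (c - b) ^ 2))).congr_deriv ?_
    field_simp
    ring
  have hlim : Tendsto g atTop (𝓝 (-(b / (b - c)) * 0 + b * c / (c - b) ^ 2 * log (c / b))) :=
    ((tendsto_inv_one_add_mul_atTop hb).const_mul _).add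
      ((tendsto_log_one_add_mul_sub_log_one_add_mul hb hc).const_mul _)
  convert integrableOn_and_integral_Ioi_of_hasDerivAt_of_nonneg hderiv
    (fun θ hθ => by have : 0 < θ := hθ; positivity) hlim using 2
  simp [g]
  ring

end Integrals

section ClosedForm

variable {ι : Type*} [DecidableEq ι]

noncomputable def splitTimeClosedForm (b : ℝ) (a : ι → ℝ) (t : Finset ι) : ℝ :=
  ∏ i ∈ t, a i / (a i - b)
    + ∑ j ∈ t, b * a j / (a j - b) ^ 2 * lagrangeWeight a t j * log (b / a j)

theorem splitTimeClosedForm_of_eq_const_mul {b b' c : ℝ} {a a' : ι → ℝ} {t : Finset ι}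
    (hc : c ≠ 0) (hb : b' = c * b) (ha : ∀ i ∈ t, a' i = c * a i) :
    splitTimeClosedForm b' a' t = splitTimeClosedForm b a t := by
  unfold splitTimeClosedForm
  congr 1
  · exact Finset.prod_congr rfl fun i hi => by
      rw [ha i hi, hb, ← mul_sub, mul_div_mul_left _ _ hc]
  · refine Finset.sum_congr rfl fun j hj => ?_
    rw [lagrangeWeight_of_eq_const_mul hc ha hj, ha j hj, hb, ← mul_sub, mul_pow,
      mul_mul_mul_comm, ← sq, mul_div_mul_left _ _ (pow_ne_zero 2 hc), mul_div_mul_left _ _ hc]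

theorem mul_integral_Ioi_prod_eq_splitTimeClosedForm {b : ℝ} (hb : 0 < b) {a : ι → ℝ}
    {t : Finset ι} (ha : ∀ i ∈ t, 0 < a i) (hinj : Set.InjOn a t) (hab : ∀ i ∈ t, a i ≠ b) :
    b * ∫ θ in Ioi (0 : ℝ), ((1 + θ * b) ^ 2)⁻¹ * ∏ i ∈ t, (1 - 1 / (1 + θ * a i))
      = splitTimeClosedForm b a t := by
  obtain ⟨hint₀, hval₀⟩ := integral_Ioi_mul_inv_one_add_mul_sq hb
  choose hint hval using fun j (hj : j ∈ t) =>
    integral_Ioi_mul_inv_one_add_mul_sq_mul_inv hb (ha j hj) (hab j hj)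
  have hpartial : EqOn
      (fun θ => b * (((1 + θ * b) ^ 2)⁻¹ * ∏ i ∈ t, (1 - 1 / (1 + θ * a i))))
      (fun θ => b * ((1 + θ * b) ^ 2)⁻¹
        - ∑ j ∈ t, lagrangeWeight a t j * (b * ((1 + θ * b) ^ 2)⁻¹ * (1 + θ * a j)⁻¹))
      (Ioi 0) := fun θ (hθ : 0 < θ) => by
    dsimp only
    have hden : ∀ i ∈ t, 1 + θ * a i ≠ 0 := fun i hi => by have := ha i hi; positivity
    rw [prod_one_sub_one_div_eq_one_sub_sum hinj hθ.ne' hden,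
      mul_sub, mul_sub, mul_one, Finset.mul_sum, Finset.mul_sum]
    exact congrArg _ (Finset.sum_congr rfl fun j _ => by ring)
  have hweights := prod_div_sub_eq_one_add_sum hinj hab
  rw [← integral_const_mul, setIntegral_congr_fun measurableSet_Ioi hpartial,
    integral_sub hint₀ (integrable_finsetSum t fun j hj => (hint j hj).const_mul _),
    integral_finsetSum t fun j hj => (hint j hj).const_mul _, hval₀,
    Finset.sum_congr rfl fun j hj => by rw [integral_const_mul, hval j hj], splitTimeClosedForm,
    hweights, add_assoc, sub_eq_add_neg, ← Finset.sum_neg_distrib, ← Finset.sum_add_distrib]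
  refine congrArg _ (Finset.sum_congr rfl fun j hj => ?_)
  rw [← inv_div (a j) b, log_inv, ← neg_sub (a j) b, div_neg]
  ring

end ClosedForm

theorem abs_exp_sub_one (x : ℝ) : |exp x - 1| = SignType.sign x * (exp x - 1) := by
  rcases lt_trichotomy x 0 with hx | rfl | hx
  · rw [sign_neg hx, abs_of_neg (by linarith [exp_lt_one_iff.2 hx])]
    simp
  · simp
  · rw [sign_pos hx, abs_of_pos (by linarith [one_lt_exp_iff.2 hx])]
    simp

theorem nearcritical_split_time_distribution_general
    (r μ : ℝ) (hr : 0 < r) (hμ : μ ≠ 0) (k : ℕ)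
    (s : ℕ → ℝ) (hs0 : s 0 = 0)
    (hs : ∀ i ∈ Finset.Ico 1 k, s i ∈ Set.Ioo (0 : ℝ) 1)
    (hdist : ∀ i ∈ Finset.Ico 1 k, ∀ j ∈ Finset.Ico 1 k, i ≠ j → s i ≠ s j)
    (E : ℕ → ℝ) (hE : ∀ j, E j = Real.exp (r * μ * (1 - s j)) - 1) :
    (k : ℝ) * |E 0| *
        ∫ θ in Set.Ioi (0 : ℝ),
          ((1 + θ * |E 0|) ^ 2)⁻¹ * ∏ i ∈ Finset.Ico 1 k, (1 - 1 / (1 + θ * |E i|))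
      = (k : ℝ) * ∏ i ∈ Finset.Ico 1 k, E i / (E i - E 0)
        + (k : ℝ) * ∑ j ∈ Finset.Ico 1 k,
            (E 0 * E j / (E j - E 0) ^ 2) *
              (∏ i ∈ (Finset.Ico 1 k).erase j, E i / (E i - E j)) *
                Real.log (E 0 / E j) := by
  have hrμ : r * μ ≠ 0 := mul_ne_zero hr.ne' hμ
  have hσ : (SignType.sign μ : ℝ) ≠ 0 := left_ne_zero_of_mul (b := |μ|) (by rwa [sign_mul_abs])
  have habs : ∀ i, s i < 1 → |E i| = SignType.sign μ * E i := fun i hi => by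
    rw [hE, abs_exp_sub_one, sign_mul, sign_mul, sign_pos hr, sign_pos (sub_pos.2 hi)]
    simp
  have hpos : ∀ i, s i < 1 → 0 < |E i| := fun i hi => by
    rw [hE, abs_pos, sub_ne_zero, Ne, exp_eq_one_iff]
    exact mul_ne_zero hrμ (sub_ne_zero.2 hi.ne')
  have hinj : ∀ i j, s i < 1 → s j < 1 → |E i| = |E j| → s i = s j := fun i j hi hj h => by
    rw [habs i hi, habs j hj, mul_right_inj' hσ, hE, hE, sub_left_inj, exp_eq_exp,
      mul_right_inj' hrμ] at h
    linarith
  have hlt : ∀ i ∈ Finset.Ico 1 k, s i < 1 := fun i hi => (hs i hi).2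
  have hlt0 : s 0 < 1 := by rw [hs0]; exact one_pos
  rw [mul_assoc, mul_integral_Ioi_prod_eq_splitTimeClosedForm (hpos 0 hlt0)
      (fun i hi => hpos i (hlt i hi))
      (fun i hi j hj h =>
        by_contra fun hij => hdist i hi j hj hij (hinj i j (hlt i hi) (hlt j hj) h))
      (fun i hi h => (hs i hi).1.ne' (by rw [hinj i 0 (hlt i hi) hlt0 h, hs0])),
    splitTimeClosedForm_of_eq_const_mul hσ (habs 0 hlt0) fun i hi => habs i (hlt i hi),
    splitTimeClosedForm, mul_add]
  rfl

/-- The near-critical scaling limit (Theorem 2.3), distribution function form: with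
`E j = e^{rμ(1−s_j)} − 1` (and `s 0 = 0`, so `E 0 = e^{rμ} − 1`), for pairwise distinct
`s₁, …, s_{k−1} ∈ (0,1)`,
`k|E₀| ∫₀^∞ (1+θ|E₀|)⁻² ∏_{i=1}^{k−1}(1 − 1/(1+θ|Eᵢ|)) dθ
  = k ∏_{i=1}^{k−1} Eᵢ/(Eᵢ−E₀)
    + k ∑_{j=1}^{k−1} (E₀E_j/(E_j−E₀)²)(∏_{i≠j} Eᵢ/(Eᵢ−E_j)) log(E₀/E_j)`. -/
theorem nearcritical_split_time_distribution
    (r μ : ℝ) (hr : 0 < r) (hμ : μ ≠ 0) (k : ℕ) (hk : 2 ≤ k)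
    (s : ℕ → ℝ) (hs0 : s 0 = 0)
    (hs : ∀ i ∈ Finset.Ico 1 k, s i ∈ Set.Ioo (0 : ℝ) 1)
    (hdist : ∀ i ∈ Finset.Ico 1 k, ∀ j ∈ Finset.Ico 1 k, i ≠ j → s i ≠ s j)
    (E : ℕ → ℝ) (hE : ∀ j, E j = Real.exp (r * μ * (1 - s j)) - 1) :
    (k : ℝ) * |E 0| *
        ∫ θ in Set.Ioi (0 : ℝ),
          ((1 + θ * |E 0|) ^ 2)⁻¹ * ∏ i ∈ Finset.Ico 1 k, (1 - 1 / (1 + θ * |E i|))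
      = (k : ℝ) * ∏ i ∈ Finset.Ico 1 k, E i / (E i - E 0)
        + (k : ℝ) * ∑ j ∈ Finset.Ico 1 k,
            (E 0 * E j / (E j - E 0) ^ 2) *
              (∏ i ∈ (Finset.Ico 1 k).erase j, E i / (E i - E j)) *
                Real.log (E 0 / E j) :=
  nearcritical_split_time_distribution_general r μ hr hμ k s hs0 hs hdist E hE
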